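/- arXiv:0912.1792 — 5 statements merged into one kernel-verified Lean document; each statement's English description precedes it below -/
import Mathlib

section
/- Let χ_S > 0, χ_N > 0, D_S > 0, α > 0, ε > 0. Then there exists a unique σ ∈ (0, min(1/ε, (χ_S+χ_N))) ∩ (0, 1/ε) solving χ_N − σ/(1 − (εσ)²) = χ_S · σ/√(4 D_S α + σ²), i.e. the function F(σ) = χ_N − σ/(1−(εσ)²) − χ_S σ/√(4 D_S α + σ²) has exactly one zero on the interval (0, 1/ε). -/
/-!
With `g σ = σ / (1 - (εσ)²) + χ_S σ / √(4 D_S α + σ²)` the equation reads `g σ = χ_N`.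
On `[0, 1/ε)` the first summand is strictly increasing and blows up at `1/ε`, the second is
nondecreasing, and `g 0 = 0 < χ_N`; so the intermediate value theorem gives a solution and strict
monotonicity makes it unique.
-/

open Real Filter Topology Set

theorem existsUnique_mem_Ioo_eq_of_strictMonoOn_Ico {f : ℝ → ℝ} {a b y : ℝ} (hab : a < b)
    (hcont : ContinuousOn f (Ico a b)) (hmono : StrictMonoOn f (Ico a b)) (hfa : f a < y)
    (hlim : Tendsto f (𝓝[<] b) atTop) :
    ∃! x, x ∈ Ioo a b ∧ f x = y := by
  obtain ⟨b', ⟨hab', hb'b⟩, hyb'⟩ :=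
    (Filter.Eventually.and (Ioo_mem_nhdsLT hab) (hlim.eventually_gt_atTop y)).exists
  obtain ⟨x, ⟨hax, hxb'⟩, hfx⟩ :=
    intermediate_value_Ioo hab'.le (hcont.mono (Icc_subset_Ico_right hb'b)) ⟨hfa, hyb'⟩
  refine ⟨x, ⟨⟨hax, hxb'.trans hb'b⟩, hfx⟩, fun z ⟨hz, hfz⟩ => ?_⟩
  exact hmono.injOn (Ioo_subset_Ico_self hz) ⟨hax.le, hxb'.trans hb'b⟩ (hfz.trans hfx.symm)

theorem one_sub_mul_sq_pos {ε σ : ℝ} (hε : 0 < ε) (hσ : σ ∈ Ico 0 (1 / ε)) :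
    0 < 1 - (ε * σ) ^ 2 := by
  have hεσ : ε * σ < 1 := (lt_div_iff₀' hε).mp hσ.2
  linarith [pow_lt_one₀ (mul_nonneg hε.le hσ.1) hεσ two_ne_zero]

theorem strictMonoOn_div_one_sub_sq {ε : ℝ} (hε : 0 < ε) :
    StrictMonoOn (fun σ => σ / (1 - (ε * σ) ^ 2)) (Ico 0 (1 / ε)) := by
  intro s hs t ht hst
  have hsq : (ε * s) ^ 2 ≤ (ε * t) ^ 2 := by
    gcongr
    · exact mul_nonneg hε.le hs.1
  calc s / (1 - (ε * s) ^ 2) ≤ s / (1 - (ε * t) ^ 2) :=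
        div_le_div_of_nonneg_left hs.1 (one_sub_mul_sq_pos hε ht) (by linarith)
    _ < t / (1 - (ε * t) ^ 2) := div_lt_div_of_pos_right hst (one_sub_mul_sq_pos hε ht)

theorem monotoneOn_div_sqrt_add_sq {c : ℝ} (hc : 0 ≤ c) :
    MonotoneOn (fun σ => σ / √(c + σ ^ 2)) (Ici 0) := by
  intro s (hs : 0 ≤ s) t (ht : 0 ≤ t) hst
  rcases hs.eq_or_lt with rfl | hs
  · simp only [zero_div]
    positivity
  have ht' : 0 < t := hs.trans_le hst
  have hsqrt (u : ℝ) (hu : 0 ≤ u) (v : ℝ) : u * √(c + v ^ 2) = √(u ^ 2 * (c + v ^ 2)) := by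
    rw [sqrt_mul (sq_nonneg u), sqrt_sq hu]
  rw [div_le_div_iff₀ (sqrt_pos.mpr (by positivity)) (sqrt_pos.mpr (by positivity)),
    hsqrt s hs.le, hsqrt t ht]
  gcongr sqrt ?_
  nlinarith [mul_le_mul_of_nonneg_left (pow_le_pow_left₀ hs.le hst 2) hc]

theorem tendsto_div_one_sub_sq_nhdsLT {ε : ℝ} (hε : 0 < ε) :
    Tendsto (fun σ => σ / (1 - (ε * σ) ^ 2)) (𝓝[<] (1 / ε)) atTop := by
  have hden : Tendsto (fun σ => 1 - (ε * σ) ^ 2) (𝓝[<] (1 / ε)) (𝓝[>] 0) := by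
    refine tendsto_nhdsWithin_iff.mpr ⟨?_, ?_⟩
    · refine ((by fun_prop : Continuous fun σ => 1 - (ε * σ) ^ 2).tendsto' _ _ ?_).mono_left
        nhdsWithin_le_nhds
      field_simp
      ring
    · filter_upwards [Ioo_mem_nhdsLT (one_div_pos.mpr hε)] with σ hσ
      exact one_sub_mul_sq_pos hε (Ioo_subset_Ico_self hσ)
  exact ((tendsto_nhdsWithin_of_tendsto_nhds tendsto_id).pos_mul_atTop (one_div_pos.mpr hε)
    (tendsto_inv_nhdsGT_zero.comp hden)).congr fun σ => (div_eq_mul_inv _ _).symm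

/-- `g` from the header, with `c = 4 D_S α`. -/
noncomputable def pulseSpeedMap (χS c ε σ : ℝ) : ℝ :=
  σ / (1 - (ε * σ) ^ 2) + χS * σ / √(c + σ ^ 2)

section pulseSpeedMap

variable {χS c ε : ℝ}

theorem strictMonoOn_pulseSpeedMap (hχ : 0 ≤ χS) (hc : 0 ≤ c) (hε : 0 < ε) :
    StrictMonoOn (pulseSpeedMap χS c ε) (Ico 0 (1 / ε)) := by
  refine (strictMonoOn_div_one_sub_sq hε).add_monotone fun s hs t ht hst => ?_
  simpa only [mul_div_assoc] using mul_le_mul_of_nonneg_left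
    (monotoneOn_div_sqrt_add_sq hc (Ico_subset_Ici_self hs) (Ico_subset_Ici_self ht) hst) hχ

theorem continuousOn_pulseSpeedMap (hc : 0 < c) (hε : 0 < ε) :
    ContinuousOn (pulseSpeedMap χS c ε) (Ico 0 (1 / ε)) := by
  refine (continuousOn_id.div (by fun_prop) fun σ hσ => (one_sub_mul_sq_pos hε hσ).ne').add ?_
  exact (continuous_const.mul continuous_id).continuousOn.div (by fun_prop)
    fun σ _ => (sqrt_pos.mpr (by positivity)).ne'

theorem tendsto_pulseSpeedMap_nhdsLT (hχ : 0 ≤ χS) (hε : 0 < ε) :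
    Tendsto (pulseSpeedMap χS c ε) (𝓝[<] (1 / ε)) atTop := by
  refine tendsto_atTop_mono' _ ?_ (tendsto_div_one_sub_sq_nhdsLT hε)
  filter_upwards [Ioo_mem_nhdsLT (one_div_pos.mpr hε)] with σ hσ
  exact le_add_of_nonneg_right (div_nonneg (mul_nonneg hχ hσ.1.le) (sqrt_nonneg _))

end pulseSpeedMap

theorem stmt3 (χS χN DS α ε : ℝ) (hS : 0 < χS) (hN : 0 < χN) (hD : 0 < DS)
    (hα : 0 < α) (hε : 0 < ε) :
    ∃! σ : ℝ, σ ∈ Set.Ioo 0 (1 / ε) ∧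
      χN - σ / (1 - (ε * σ) ^ 2) - χS * σ / Real.sqrt (4 * DS * α + σ ^ 2) = 0 := by
  have hc : 0 < 4 * DS * α := by positivity
  have hg0 : pulseSpeedMap χS (4 * DS * α) ε 0 < χN := by simpa [pulseSpeedMap] using hN
  have key := existsUnique_mem_Ioo_eq_of_strictMonoOn_Ico (one_div_pos.mpr hε)
    (continuousOn_pulseSpeedMap hc hε) (strictMonoOn_pulseSpeedMap hS.le hc.le hε) hg0
    (tendsto_pulseSpeedMap_nhdsLT hS.le hε)
  simpa only [pulseSpeedMap, sub_sub, sub_eq_zero, eq_comm (a := χN)] using key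
end

section
/- Let χ_S, χ_N, D_S, α, ε > 0 and σ ∈ (0, 1/ε). Set λ⁻ = −σ + (χ_S+χ_N)(1−(εσ)²), λ⁺ = −σ + (−χ_S+χ_N)(1−(εσ)²), and s = √(4 D_S α + σ²). Assume λ⁻ > 0 and λ⁺ < 0. Then the ratio identity λ⁻/(−λ⁺) = (s + σ)/(s − σ) holds if and only if χ_N − σ/(1−(εσ)²) = χ_S σ/s. -/
/-! Cross-multiplying the ratio identity turns it into `(λ⁻ + λ⁺) s = (λ⁻ - λ⁺) σ`, and with
`q = 1 - (εσ)²` one has `λ⁻ + λ⁺ = 2 (χ_N q - σ)` and `λ⁻ - λ⁺ = 2 χ_S q`; dividing by `2 q s`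
gives the speed equation. -/

open Real

theorem lt_sqrt_add_sq {a : ℝ} (σ : ℝ) (ha : 0 < a) : σ < √(a + σ ^ 2) :=
  Real.lt_sqrt_of_sq_lt (by linarith)

theorem one_sub_mul_sq_pos_of_mem_Ioo {ε σ : ℝ} (hε : 0 < ε) (hσ : σ ∈ Set.Ioo 0 (1 / ε)) :
    0 < 1 - (ε * σ) ^ 2 := by
  obtain ⟨hσ0, hσε⟩ := hσ
  have hεσ : ε * σ < 1 := by rwa [lt_div_iff₀' hε] at hσε
  nlinarith [mul_pos hε hσ0]

theorem div_eq_add_div_sub_iff {a b s σ : ℝ} (hb : b ≠ 0) (hs : s - σ ≠ 0) :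
    a / b = (s + σ) / (s - σ) ↔ (a - b) * s = (a + b) * σ := by
  rw [div_eq_div_iff hb hs]
  constructor <;> intro h <;> linear_combination h

theorem sub_div_eq_mul_div_iff {x y σ q s : ℝ} (hq : q ≠ 0) (hs : s ≠ 0) :
    x - σ / q = y * σ / s ↔ (x * q - σ) * s = y * q * σ := by
  rw [sub_div' hq, div_eq_div_iff hq hs]
  constructor <;> intro h <;> linear_combination h

theorem stmt4_general (χS χN DS α ε σ : ℝ) (hD : 0 < DS)
    (hα : 0 < α) (hε : 0 < ε) (hσ : σ ∈ Set.Ioo 0 (1 / ε))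
    (lm lp s : ℝ)
    (hlm : lm = -σ + (χS + χN) * (1 - (ε * σ) ^ 2))
    (hlp : lp = -σ + (-χS + χN) * (1 - (ε * σ) ^ 2))
    (hs : s = Real.sqrt (4 * DS * α + σ ^ 2))
    (hlpneg : lp < 0) :
    lm / (-lp) = (s + σ) / (s - σ) ↔ χN - σ / (1 - (ε * σ) ^ 2) = χS * σ / s := by
  have hq := one_sub_mul_sq_pos_of_mem_Ioo hε hσ
  have hσs : σ < s := hs ▸ lt_sqrt_add_sq σ (by positivity)
  have hs0 : s ≠ 0 := (hσ.1.trans hσs).ne'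
  rw [div_eq_add_div_sub_iff (by linarith) (sub_ne_zero.mpr hσs.ne'),
    sub_div_eq_mul_div_iff hq.ne' hs0]
  subst hlm hlp
  constructor <;> intro h
  · linear_combination h / 2
  · linear_combination 2 * h

theorem stmt4 (χS χN DS α ε σ : ℝ) (hS : 0 < χS) (hN : 0 < χN) (hD : 0 < DS)
    (hα : 0 < α) (hε : 0 < ε) (hσ : σ ∈ Set.Ioo 0 (1 / ε))
    (lm lp s : ℝ)
    (hlm : lm = -σ + (χS + χN) * (1 - (ε * σ) ^ 2))
    (hlp : lp = -σ + (-χS + χN) * (1 - (ε * σ) ^ 2))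
    (hs : s = Real.sqrt (4 * DS * α + σ ^ 2))
    (hlmpos : 0 < lm) (hlpneg : lp < 0) :
    lm / (-lp) = (s + σ) / (s - σ) ↔ χN - σ / (1 - (ε * σ) ^ 2) = χS * σ / s :=
  stmt4_general χS χN DS α ε σ hD hα hε hσ lm lp s hlm hlp hs hlpneg
end

section
/- Let α > 0, β > 0, D_S > 0, λ > 0 with λ ≠ √(α/D_S), and ρ(x) = ρ₀ e^{−λ|x|} with ρ₀ > 0. Then the equation −D_S S'' + α S = β ρ has a unique bounded solution S on ℝ, given explicitly by S(x) = βρ₀ (λ e^{−κ|x|} − κ e^{−λ|x|}) / (D_S κ (λ² − κ²)) where κ = √(α/D_S), and this S is even, strictly decreasing on (0,∞) and strictly increasing on (−∞,0); in particular sign(S'(x)) = −sign(x) for x ≠ 0. -/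
open Real Filter Set

private lemma expD (a t : ℝ) :
    HasDerivAt (fun s : ℝ => Real.exp (-a * s)) (-a * Real.exp (-a * t)) t := by
  simpa [mul_comm] using (((hasDerivAt_id t).const_mul (-a)).exp)

private lemma expD2 (a t : ℝ) :
    HasDerivAt (fun s : ℝ => Real.exp (a * s)) (a * Real.exp (a * t)) t := by
  simpa [mul_comm] using (((hasDerivAt_id t).const_mul a).exp)

private lemma constPos {f : ℝ → ℝ} (hf : ∀ x : ℝ, 0 < x → HasDerivAt f 0 x)
    {a b : ℝ} (ha : 0 < a) (hb : 0 < b) : f a = f b := by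
  have key : ∀ a b : ℝ, 0 < a → a ≤ b → f b = f a := by
    intro a b ha hab
    have hcont : ContinuousOn f (Icc a b) := fun x hx =>
      ((hf x (lt_of_lt_of_le ha hx.1)).continuousAt).continuousWithinAt
    have hderiv : ∀ x ∈ Ico a b, HasDerivWithinAt f 0 (Ici x) x := fun x hx =>
      (hf x (lt_of_lt_of_le ha hx.1)).hasDerivWithinAt
    exact constant_of_has_deriv_right_zero hcont hderiv b ⟨hab, le_refl b⟩
  rcases le_total a b with h | h
  · exact (key a b ha h).symm
  · exact key b a hb h

private lemma constNeg {f : ℝ → ℝ} (hf : ∀ x : ℝ, x < 0 → HasDerivAt f 0 x)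
    {a b : ℝ} (ha : a < 0) (hb : b < 0) : f a = f b := by
  have h2 : ∀ x : ℝ, 0 < x → HasDerivAt (fun y : ℝ => f (-y)) 0 x := by
    intro x hx
    simpa [Function.comp_def] using (hf (-x) (by linarith)).comp x (hasDerivAt_neg x)
  simpa using constPos h2 (a := -a) (b := -b) (by linarith) (by linarith)

private lemma expUnbdd {k B : ℝ} (hk : 0 < k) (h : ∀ x : ℝ, 0 < x → Real.exp (k * x) ≤ B) :
    False := by
  have hB : 0 < B := lt_of_lt_of_le (Real.exp_pos _) (h (1 / k) (by positivity))
  have hx0 : 0 < Real.log (B + 1) / k := by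
    apply div_pos _ hk
    exact Real.log_pos (by linarith)
  have := h _ hx0
  rw [mul_div_cancel₀ _ hk.ne', Real.exp_log (by linarith)] at this
  linarith

set_option maxHeartbeats 2000000 in
theorem stmt7 (α β DS lam ρ₀ : ℝ) (hα : 0 < α) (hβ : 0 < β) (hD : 0 < DS)
    (hlam : 0 < lam) (hρ₀ : 0 < ρ₀) (κ : ℝ) (hκ : κ = Real.sqrt (α / DS))
    (hne : lam ≠ κ)
    (S : ℝ → ℝ)
    (hS : ∀ x, S x = β * ρ₀ * (lam * Real.exp (-κ * |x|) - κ * Real.exp (-lam * |x|)) /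
      (DS * κ * (lam ^ 2 - κ ^ 2))) :
    -- S solves the equation (off the origin, where it is twice differentiable)
    (∀ x ≠ 0, -DS * deriv (deriv S) x + α * S x = β * (ρ₀ * Real.exp (-lam * |x|))) ∧
    -- S is bounded
    (∃ C, ∀ x, |S x| ≤ C) ∧
    -- uniqueness among bounded solutions
    (∀ (T T' : ℝ → ℝ), (∀ x, HasDerivAt T (T' x) x) →
      (∀ x ≠ 0, HasDerivAt T' ((α * T x - β * (ρ₀ * Real.exp (-lam * |x|))) / DS) x) →
      (∃ C, ∀ x, |T x| ≤ C) → T = S) ∧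
    -- S is even, strictly decreasing on (0,∞) and strictly increasing on (−∞,0)
    (∀ x, S (-x) = S x) ∧
    StrictAntiOn S (Set.Ici 0) ∧ StrictMonoOn S (Set.Iic 0) ∧
    (∀ x, 0 < x → deriv S x < 0) ∧ (∀ x, x < 0 → 0 < deriv S x) := by
  have hADpos : 0 < α / DS := div_pos hα hD
  have hκpos : 0 < κ := by rw [hκ]; exact Real.sqrt_pos.mpr hADpos
  have hκ2 : DS * κ ^ 2 = α := by
    rw [hκ, Real.sq_sqrt hADpos.le]; field_simp
  have hlk : lam ^ 2 - κ ^ 2 ≠ 0 := by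
    intro h
    exact hne (by nlinarith)
  set den := DS * κ * (lam ^ 2 - κ ^ 2) with hden
  have hden0 : den ≠ 0 := mul_ne_zero (mul_ne_zero hD.ne' hκpos.ne') hlk
  set g : ℝ → ℝ :=
    fun t => β * ρ₀ * (lam * Real.exp (-κ * t) - κ * Real.exp (-lam * t)) / den with hg
  set g1 : ℝ → ℝ :=
    fun t => β * ρ₀ * (κ * lam) * (Real.exp (-lam * t) - Real.exp (-κ * t)) / den with hg1
  set g2 : ℝ → ℝ :=
    fun t => β * ρ₀ * (κ * lam) *
      (-lam * Real.exp (-lam * t) + κ * Real.exp (-κ * t)) / den with hg2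
  have Hg1 : ∀ t, HasDerivAt g (g1 t) t := by
    intro t
    have h1 := (((expD κ t).const_mul lam).sub ((expD lam t).const_mul κ)).const_mul (β * ρ₀)
    have h2 := h1.div_const den
    refine h2.congr_deriv ?_
    simp only [hg1]; ring
  have Hg2 : ∀ t, HasDerivAt g1 (g2 t) t := by
    intro t
    have h1 := (((expD lam t).sub (expD κ t)).const_mul (β * ρ₀ * (κ * lam))).div_const den
    refine h1.congr_deriv ?_
    simp only [hg2]; ring
  have hODE : ∀ t : ℝ, -DS * g2 t + α * g t = β * (ρ₀ * Real.exp (-lam * t)) := by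
    intro t
    rw [← hκ2]
    simp only [hg, hg2, hden]
    field_simp
    ring
  -- eventual equalities
  have hSg : ∀ x : ℝ, 0 < x → S =ᶠ[nhds x] g := by
    intro x hx
    filter_upwards [Ioi_mem_nhds hx] with y hy
    rw [hS y, abs_of_pos hy]
  have hSgneg : ∀ x : ℝ, x < 0 → S =ᶠ[nhds x] fun y => g (-y) := by
    intro x hx
    filter_upwards [Iio_mem_nhds hx] with y hy
    rw [hS y, abs_of_neg hy]
  have Hc1 : ∀ y : ℝ, HasDerivAt (fun y : ℝ => g (-y)) (-g1 (-y)) y := fun y => by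
    simpa [Function.comp_def] using (Hg1 (-y)).comp y (hasDerivAt_neg y)
  have hpos : ∀ x : ℝ, 0 < x →
      HasDerivAt S (g1 x) x ∧ HasDerivAt (deriv S) (g2 x) x := by
    intro x hx
    have heq := hSg x hx
    refine ⟨(Hg1 x).congr_of_eventuallyEq heq, ?_⟩
    have heq2 : deriv S =ᶠ[nhds x] deriv g := heq.deriv
    have hgd : deriv g = g1 := funext fun t => (Hg1 t).deriv
    rw [hgd] at heq2
    exact (Hg2 x).congr_of_eventuallyEq heq2
  have hneg : ∀ x : ℝ, x < 0 →
      HasDerivAt S (-g1 (-x)) x ∧ HasDerivAt (deriv S) (g2 (-x)) x := by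
    intro x hx
    have heq := hSgneg x hx
    refine ⟨(Hc1 x).congr_of_eventuallyEq heq, ?_⟩
    have heq2 : deriv S =ᶠ[nhds x] deriv (fun y : ℝ => g (-y)) := heq.deriv
    have hgd : deriv (fun y : ℝ => g (-y)) = fun y => -g1 (-y) := funext fun t => (Hc1 t).deriv
    rw [hgd] at heq2
    have Hc2 : HasDerivAt (fun y : ℝ => -g1 (-y)) (g2 (-x)) x := by
      simpa [Function.comp_def, Pi.neg_def] using ((Hg2 (-x)).comp x (hasDerivAt_neg x)).neg
    exact Hc2.congr_of_eventuallyEq heq2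
  have hg1neg : ∀ t : ℝ, 0 < t → g1 t < 0 := by
    intro t ht
    simp only [hg1]
    rcases hne.lt_or_gt with hlt | hlt
    · have hd : den < 0 := by
        rw [hden]
        exact mul_neg_of_pos_of_neg (by positivity) (by nlinarith)
      have hnum : 0 < β * ρ₀ * (κ * lam) * (Real.exp (-lam * t) - Real.exp (-κ * t)) := by
        apply mul_pos (by positivity)
        have : Real.exp (-κ * t) < Real.exp (-lam * t) := Real.exp_lt_exp.mpr (by nlinarith)
        linarith
      exact div_neg_of_pos_of_neg hnum hd
    · have hd : 0 < den := by
        rw [hden]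
        exact mul_pos (by positivity) (by nlinarith)
      have hnum : β * ρ₀ * (κ * lam) * (Real.exp (-lam * t) - Real.exp (-κ * t)) < 0 := by
        apply mul_neg_of_pos_of_neg (by positivity)
        have : Real.exp (-lam * t) < Real.exp (-κ * t) := Real.exp_lt_exp.mpr (by nlinarith)
        linarith
      exact div_neg_of_neg_of_pos hnum hd
  have hbound : ∀ x : ℝ, |S x| ≤ β * ρ₀ * (lam + κ) / |den| := by
    intro x
    have hA1 : Real.exp (-κ * |x|) ≤ 1 := Real.exp_le_one_iff.mpr (by nlinarith [abs_nonneg x])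
    have hB1 : Real.exp (-lam * |x|) ≤ 1 := Real.exp_le_one_iff.mpr (by nlinarith [abs_nonneg x])
    have hA0 := Real.exp_pos (-κ * |x|)
    have hB0 := Real.exp_pos (-lam * |x|)
    rw [hS x, abs_div]
    gcongr
    rw [abs_mul, abs_of_pos (show (0:ℝ) < β * ρ₀ by positivity)]
    have h2 : |lam * Real.exp (-κ * |x|) - κ * Real.exp (-lam * |x|)| ≤ lam + κ := by
      rw [abs_le]
      constructor <;> nlinarith
    exact mul_le_mul_of_nonneg_left h2 (by positivity)
  -- derivative of S at 0 is 0
  have hS0 : HasDerivAt S 0 0 := by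
    have hg0 : HasDerivAt g 0 0 := by
      have := Hg1 0
      simpa [hg1] using this
    rw [hasDerivAt_iff_isLittleO] at hg0 ⊢
    simp only [sub_zero, smul_zero, mul_zero, zero_mul, smul_eq_mul] at hg0 ⊢
    have habs : Tendsto (fun y : ℝ => |y|) (nhds 0) (nhds (0:ℝ)) :=
      continuous_abs.tendsto' 0 0 abs_zero
    have h2 := hg0.comp_tendsto habs
    have h3 : (fun y : ℝ => S y - S 0) = fun y => g |y| - g 0 := by
      funext y
      have e1 : S y = g |y| := hS y
      have e2 : S 0 = g 0 := by rw [hS 0]; simp [hg]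
      rw [e1, e2]
    rw [h3]
    refine h2.trans_isBigO ?_
    exact Asymptotics.isBigO_of_le _ (fun y => by simp [Real.norm_eq_abs])
  have hScont : Continuous S := by
    have h : S = fun x => β * ρ₀ * (lam * Real.exp (-κ * |x|) - κ * Real.exp (-lam * |x|)) / den :=
      funext hS
    rw [h]; fun_prop
  have hderivpos : ∀ x : ℝ, 0 < x → deriv S x < 0 := by
    intro x hx
    rw [(hpos x hx).1.deriv]
    exact hg1neg x hx
  have hderivneg : ∀ x : ℝ, x < 0 → 0 < deriv S x := by
    intro x hx
    rw [(hneg x hx).1.deriv]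
    have := hg1neg (-x) (by linarith)
    linarith
  clear_value den g g1 g2
  refine ⟨?_, ⟨β * ρ₀ * (lam + κ) / |den|, hbound⟩, ?_, ?_, ?_, ?_, hderivpos, hderivneg⟩
  · -- the ODE
    intro x hx
    rcases hx.lt_or_gt with h | h
    · rw [(hneg x h).2.deriv, abs_of_neg h]
      have e1 : S x = g (-x) := by rw [hS x, abs_of_neg h]; simp only [hg]
      rw [e1]
      exact hODE (-x)
    · rw [(hpos x h).2.deriv, abs_of_pos h]
      have e1 : S x = g x := by rw [hS x, abs_of_pos h]; simp only [hg]
      rw [e1]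
      exact hODE x
  · -- uniqueness
    rintro T T' hT hT' ⟨C, hC⟩
    have hSd : ∀ x : ℝ, HasDerivAt S (deriv S x) x := by
      intro x
      rcases lt_trichotomy x 0 with h | h | h
      · exact (hneg x h).1.deriv ▸ (hneg x h).1
      · subst h
        have hd := hS0.deriv
        rw [hd]; exact hS0
      · exact (hpos x h).1.deriv ▸ (hpos x h).1
    have hSd' : ∀ x : ℝ, x ≠ 0 →
        HasDerivAt (deriv S) ((α * S x - β * (ρ₀ * Real.exp (-lam * |x|))) / DS) x := by
      intro x hx
      rcases hx.lt_or_gt with h | h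
      · have h2 := (hneg x h).2
        have e1 : S x = g (-x) := by rw [hS x, abs_of_neg h]; simp only [hg]
        have e2 : (α * S x - β * (ρ₀ * Real.exp (-lam * |x|))) / DS = g2 (-x) := by
          rw [e1, abs_of_neg h, div_eq_iff hD.ne']
          linear_combination hODE (-x)
        rw [e2]; exact h2
      · have h2 := (hpos x h).2
        have e1 : S x = g x := by rw [hS x, abs_of_pos h]; simp only [hg]
        have e2 : (α * S x - β * (ρ₀ * Real.exp (-lam * |x|))) / DS = g2 x := by
          rw [e1, abs_of_pos h, div_eq_iff hD.ne']
          linear_combination hODE x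
        rw [e2]; exact h2
    set u : ℝ → ℝ := fun x => T x - S x with hu_def
    set u' : ℝ → ℝ := fun x => T' x - deriv S x with hu'_def
    have hu : ∀ x, HasDerivAt u (u' x) x := fun x => (hT x).sub (hSd x)
    have hu' : ∀ x : ℝ, x ≠ 0 → HasDerivAt u' (κ ^ 2 * u x) x := by
      intro x hx
      have h2 := (hT' x hx).sub (hSd' x hx)
      have e : (α * T x - β * (ρ₀ * Real.exp (-lam * |x|))) / DS -
          (α * S x - β * (ρ₀ * Real.exp (-lam * |x|))) / DS = κ ^ 2 * u x := by
        simp only [hu_def]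
        rw [div_sub_div_same, div_eq_iff hD.ne']
        linear_combination (S x - T x) * hκ2
      rw [← e]; exact h2
    set w : ℝ → ℝ := fun x => u' x - κ * u x with hw_def
    set v : ℝ → ℝ := fun x => u' x + κ * u x with hv_def
    have hw : ∀ x : ℝ, x ≠ 0 → HasDerivAt w (-κ * w x) x := by
      intro x hx
      have h2 := (hu' x hx).sub ((hu x).const_mul κ)
      have e : κ ^ 2 * u x - κ * u' x = -κ * w x := by simp only [hw_def]; ring
      rw [← e]; exact h2
    have hv : ∀ x : ℝ, x ≠ 0 → HasDerivAt v (κ * v x) x := by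
      intro x hx
      have h2 := (hu' x hx).add ((hu x).const_mul κ)
      have e : κ ^ 2 * u x + κ * u' x = κ * v x := by simp only [hv_def]; ring
      rw [← e]; exact h2
    set H : ℝ → ℝ := fun x => Real.exp (κ * x) * w x with hH_def
    set G : ℝ → ℝ := fun x => Real.exp (-κ * x) * v x with hG_def
    clear_value u u' w v H G
    have hH : ∀ x : ℝ, x ≠ 0 → HasDerivAt H 0 x := by
      intro x hx
      have h2 := (expD2 κ x).mul (hw x hx)
      have e : κ * Real.exp (κ * x) * w x + Real.exp (κ * x) * (-κ * w x) = 0 := by ring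
      rw [hH_def, ← e]; exact h2
    have hG : ∀ x : ℝ, x ≠ 0 → HasDerivAt G 0 x := by
      intro x hx
      have h2 := (expD κ x).mul (hv x hx)
      have e : -κ * Real.exp (-κ * x) * v x + Real.exp (-κ * x) * (κ * v x) = 0 := by ring
      rw [hG_def, ← e]; exact h2
    have hexp_ne : ∀ y : ℝ, Real.exp y ≠ 0 := fun y => (Real.exp_pos y).ne'
    have hwpos : ∀ x : ℝ, 0 < x → w x = H 1 * Real.exp (-κ * x) := by
      intro x hx
      have h2 : H x = H 1 := constPos (fun y hy => hH y hy.ne') hx one_pos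
      simp only [hH_def] at h2 ⊢
      rw [← h2, neg_mul, Real.exp_neg]
      field_simp
    have hvpos : ∀ x : ℝ, 0 < x → v x = G 1 * Real.exp (κ * x) := by
      intro x hx
      have h2 : G x = G 1 := constPos (fun y hy => hG y hy.ne') hx one_pos
      simp only [hG_def] at h2 ⊢
      rw [← h2, neg_mul, Real.exp_neg]
      field_simp
    have hwneg : ∀ x : ℝ, x < 0 → w x = H (-1) * Real.exp (-κ * x) := by
      intro x hx
      have h2 : H x = H (-1) := constNeg (fun y hy => hH y hy.ne) hx (by norm_num)
      simp only [hH_def] at h2 ⊢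
      rw [← h2, neg_mul, Real.exp_neg]
      field_simp
    have hvneg : ∀ x : ℝ, x < 0 → v x = G (-1) * Real.exp (κ * x) := by
      intro x hx
      have h2 : G x = G (-1) := constNeg (fun y hy => hG y hy.ne) hx (by norm_num)
      simp only [hG_def] at h2 ⊢
      rw [← h2, neg_mul, Real.exp_neg]
      field_simp
    have hM : ∀ x : ℝ, |u x| ≤ C + β * ρ₀ * (lam + κ) / |den| := by
      intro x
      simp only [hu_def]
      calc |T x - S x| ≤ |T x| + |S x| := abs_sub _ _
        _ ≤ C + β * ρ₀ * (lam + κ) / |den| := add_le_add (hC x) (hbound x)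
    set M := C + β * ρ₀ * (lam + κ) / |den| with hM_def
    clear_value M
    have hM0 : 0 ≤ M := (abs_nonneg _).trans (hM 0)
    have h2κ : (0:ℝ) < 2 * κ := by positivity
    have huvw : ∀ x : ℝ, 2 * κ * u x = v x - w x := by
      intro x; simp only [hv_def, hw_def]; ring
    have hG1 : G 1 = 0 := by
      by_contra hG1
      refine expUnbdd hκpos (B := (2 * κ * M + |H 1|) / |G 1|) ?_
      intro x hx
      have h1 : G 1 * Real.exp (κ * x) = 2 * κ * u x + H 1 * Real.exp (-κ * x) := by
        rw [huvw x, hvpos x hx, hwpos x hx]; ring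
      have hexp1 : Real.exp (-κ * x) ≤ 1 := Real.exp_le_one_iff.mpr (by nlinarith [mul_pos hκpos hx])
      have h2 : |G 1| * Real.exp (κ * x) ≤ 2 * κ * M + |H 1| := by
        calc |G 1| * Real.exp (κ * x) = |G 1 * Real.exp (κ * x)| := by
              rw [abs_mul (G 1) (Real.exp (κ * x)), abs_of_pos (Real.exp_pos (κ * x))]
          _ = |2 * κ * u x + H 1 * Real.exp (-κ * x)| := by rw [h1]
          _ ≤ |2 * κ * u x| + |H 1 * Real.exp (-κ * x)| := abs_add_le _ _
          _ ≤ 2 * κ * M + |H 1| := by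
              rw [abs_mul (2 * κ) (u x), abs_mul (H 1) (Real.exp (-κ * x)),
                abs_of_pos (Real.exp_pos (-κ * x)), abs_of_pos h2κ]
              have h5 := hM x
              have h6 := abs_nonneg (H 1)
              have h7 := Real.exp_pos (-κ * x)
              nlinarith
      rw [le_div_iff₀ (abs_pos.mpr hG1), mul_comm]
      exact h2
    have hH1 : H (-1) = 0 := by
      by_contra hH1
      refine expUnbdd hκpos (B := (2 * κ * M + |G (-1)|) / |H (-1)|) ?_
      intro y hy
      have hx : -y < 0 := by linarith
      have h1 : H (-1) * Real.exp (κ * y) = G (-1) * Real.exp (-κ * y) - 2 * κ * u (-y) := by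
        have h0 := huvw (-y)
        rw [hvneg _ hx, hwneg _ hx] at h0
        have e1 : -κ * -y = κ * y := by ring
        have e2 : κ * -y = -κ * y := by ring
        rw [e1, e2] at h0
        linarith
      have hexp1 : Real.exp (-κ * y) ≤ 1 := Real.exp_le_one_iff.mpr (by nlinarith [mul_pos hκpos hy])
      have h2 : |H (-1)| * Real.exp (κ * y) ≤ 2 * κ * M + |G (-1)| := by
        calc |H (-1)| * Real.exp (κ * y) = |H (-1) * Real.exp (κ * y)| := by
              rw [abs_mul (H (-1)) (Real.exp (κ * y)), abs_of_pos (Real.exp_pos (κ * y))]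
          _ = |G (-1) * Real.exp (-κ * y) - 2 * κ * u (-y)| := by rw [h1]
          _ ≤ |G (-1) * Real.exp (-κ * y)| + |2 * κ * u (-y)| := abs_sub _ _
          _ ≤ 2 * κ * M + |G (-1)| := by
              rw [abs_mul (G (-1)) (Real.exp (-κ * y)), abs_mul (2 * κ) (u (-y)),
                abs_of_pos (Real.exp_pos (-κ * y)), abs_of_pos h2κ]
              have h5 := hM (-y)
              have h6 := abs_nonneg (G (-1))
              have h7 := Real.exp_pos (-κ * y)
              nlinarith
      rw [le_div_iff₀ (abs_pos.mpr hH1), mul_comm]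
      exact h2
    have hupos : ∀ x : ℝ, 0 < x → u x = -H 1 * Real.exp (-κ * x) / (2 * κ) := by
      intro x hx
      have h3 := huvw x
      rw [hvpos x hx, hwpos x hx, hG1] at h3
      rw [eq_div_iff h2κ.ne']
      linarith
    have huneg : ∀ x : ℝ, x < 0 → u x = G (-1) * Real.exp (κ * x) / (2 * κ) := by
      intro x hx
      have h3 := huvw x
      rw [hvneg x hx, hwneg x hx, hH1] at h3
      rw [eq_div_iff h2κ.ne']
      linarith
    have hu0r : u 0 = -H 1 / (2 * κ) := by
      have h1 : Tendsto u (nhdsWithin 0 (Ioi 0)) (nhds (u 0)) :=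
        ((hu 0).continuousAt.tendsto).mono_left nhdsWithin_le_nhds
      have h2 : Tendsto (fun x : ℝ => -H 1 * Real.exp (-κ * x) / (2 * κ)) (nhdsWithin 0 (Ioi 0))
          (nhds (-H 1 * Real.exp (-κ * 0) / (2 * κ))) :=
        ((Continuous.tendsto (by fun_prop) 0)).mono_left nhdsWithin_le_nhds
      have h3 : Tendsto u (nhdsWithin 0 (Ioi 0)) (nhds (-H 1 * Real.exp (-κ * 0) / (2 * κ))) := by
        refine h2.congr' ?_
        filter_upwards [self_mem_nhdsWithin] with y hy
        exact (hupos y hy).symm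
      have h4 := tendsto_nhds_unique h1 h3
      simpa using h4
    have hu0l : u 0 = G (-1) / (2 * κ) := by
      have h1 : Tendsto u (nhdsWithin 0 (Iio 0)) (nhds (u 0)) :=
        ((hu 0).continuousAt.tendsto).mono_left nhdsWithin_le_nhds
      have h2 : Tendsto (fun x : ℝ => G (-1) * Real.exp (κ * x) / (2 * κ)) (nhdsWithin 0 (Iio 0))
          (nhds (G (-1) * Real.exp (κ * 0) / (2 * κ))) :=
        ((Continuous.tendsto (by fun_prop) 0)).mono_left nhdsWithin_le_nhds
      have h3 : Tendsto u (nhdsWithin 0 (Iio 0)) (nhds (G (-1) * Real.exp (κ * 0) / (2 * κ))) := by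
        refine h2.congr' ?_
        filter_upwards [self_mem_nhdsWithin] with y hy
        exact (huneg y hy).symm
      have h4 := tendsto_nhds_unique h1 h3
      simpa using h4
    have hDer1 : HasDerivAt (fun x : ℝ => -H 1 * Real.exp (-κ * x) / (2 * κ)) (H 1 / 2) 0 := by
      have h1 := ((expD κ 0).const_mul (-H 1)).div_const (2 * κ)
      have e : -H 1 * (-κ * Real.exp (-κ * 0)) / (2 * κ) = H 1 / 2 := by
        rw [mul_zero, Real.exp_zero]
        field_simp
      rw [← e]; exact h1
    have hDer2 : HasDerivAt (fun x : ℝ => G (-1) * Real.exp (κ * x) / (2 * κ)) (G (-1) / 2) 0 := by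
      have h1 := ((expD2 κ 0).const_mul (G (-1))).div_const (2 * κ)
      have e : G (-1) * (κ * Real.exp (κ * 0)) / (2 * κ) = G (-1) / 2 := by
        rw [mul_zero, Real.exp_zero]
        field_simp
      rw [← e]; exact h1
    have huIci : ∀ y ∈ Ici (0:ℝ), u y = -H 1 * Real.exp (-κ * y) / (2 * κ) := by
      intro y hy
      rw [mem_Ici] at hy
      rcases eq_or_lt_of_le hy with h | h
      · rw [← h, hu0r]
        norm_num
      · exact hupos y h
    have huIic : ∀ y ∈ Iic (0:ℝ), u y = G (-1) * Real.exp (κ * y) / (2 * κ) := by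
      intro y hy
      rw [mem_Iic] at hy
      rcases eq_or_lt_of_le hy with h | h
      · rw [h, hu0l]
        norm_num
      · exact huneg y h
    have e1 : u' 0 = H 1 / 2 := by
      have hd1 : HasDerivWithinAt u (H 1 / 2) (Ici 0) 0 :=
        (hDer1.hasDerivWithinAt).congr huIci (huIci 0 self_mem_Ici)
      have hd2 : HasDerivWithinAt u (u' 0) (Ici 0) 0 := (hu 0).hasDerivWithinAt
      rw [← hd2.derivWithin (uniqueDiffOn_Ici 0 0 self_mem_Ici),
        hd1.derivWithin (uniqueDiffOn_Ici 0 0 self_mem_Ici)]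
    have e2 : u' 0 = G (-1) / 2 := by
      have hd1 : HasDerivWithinAt u (G (-1) / 2) (Iic 0) 0 :=
        (hDer2.hasDerivWithinAt).congr huIic (huIic 0 self_mem_Iic)
      have hd2 : HasDerivWithinAt u (u' 0) (Iic 0) 0 := (hu 0).hasDerivWithinAt
      rw [← hd2.derivWithin (uniqueDiffOn_Iic 0 0 self_mem_Iic),
        hd1.derivWithin (uniqueDiffOn_Iic 0 0 self_mem_Iic)]
    have hrel : -H 1 / (2 * κ) = G (-1) / (2 * κ) := by rw [← hu0r, hu0l]
    have hGH : G (-1) = -H 1 := by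
      have h9 := (div_eq_div_iff h2κ.ne' h2κ.ne').mp hrel
      have h10 := mul_right_cancel₀ h2κ.ne' h9
      linarith
    have hH10 : H 1 = 0 := by
      rw [e1, hGH] at e2
      linarith
    have hG10 : G (-1) = 0 := by rw [hGH, hH10, neg_zero]
    funext x
    have hux : u x = 0 := by
      rcases lt_trichotomy x 0 with h | h | h
      · rw [huneg x h, hG10]; ring
      · rw [h, hu0r, hH10]; ring
      · rw [hupos x h, hH10]; ring
    have : T x - S x = 0 := by simpa [hu_def] using hux
    linarith
  · -- even
    intro x
    rw [hS x, hS (-x), abs_neg]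
  · -- strict anti on Ici 0
    refine strictAntiOn_of_deriv_neg (convex_Ici 0) hScont.continuousOn ?_
    intro x hx
    rw [interior_Ici] at hx
    exact hderivpos x hx
  · -- strict mono on Iic 0
    refine strictMonoOn_of_deriv_pos (convex_Iic 0) hScont.continuousOn ?_
    intro x hx
    rw [interior_Iic] at hx
    exact hderivneg x hx
end

section
/- Let α > 0, M > 0, δ > 0, L > 0. There exists an integer k ≥ 1 with −(2πk/L)² + (M/(δL))·(2πk/L)²/(α + (2πk/L)²) > 0 if and only if M/(δL) > α + (2π/L)². -/
open Real

lemma aux9 (C a x : ℝ) (ha : 0 < a) (hx : 0 < x) :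
    0 < -x + C * x / (a + x) ↔ a + x < C := by
  have hax : 0 < a + x := by linarith
  constructor
  · intro h
    have h1 : x < C * x / (a + x) := by linarith
    rw [lt_div_iff₀ hax] at h1
    nlinarith
  · intro h
    have h1 : x * (a + x) < C * x := by nlinarith
    rw [← lt_div_iff₀ hax] at h1
    linarith

theorem stmt9 (α M δ L : ℝ) (hα : 0 < α) (hM : 0 < M) (hδ : 0 < δ) (hL : 0 < L) :
    (∃ k : ℕ, 1 ≤ k ∧
      0 < -(2 * π * k / L) ^ 2 +
        (M / (δ * L)) * (2 * π * k / L) ^ 2 / (α + (2 * π * k / L) ^ 2)) ↔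
    M / (δ * L) > α + (2 * π / L) ^ 2 := by
  have hπ := pi_pos
  constructor
  · rintro ⟨k, hk, hpos⟩
    have hk' : (1:ℝ) ≤ (k:ℝ) := by exact_mod_cast hk
    have hkpos : (0:ℝ) < (k:ℝ) := by linarith
    have hxk : 0 < (2 * π * k / L) ^ 2 := by
      have : 0 < 2 * π * k / L := by
        apply div_pos _ hL
        positivity
      positivity
    rw [aux9 _ _ _ hα hxk] at hpos
    have hmono : (2 * π / L) ^ 2 ≤ (2 * π * k / L) ^ 2 := by
      apply pow_le_pow_left₀ (by positivity)
      rw [div_le_div_iff₀ hL hL]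
      nlinarith [mul_pos hπ hL, mul_le_mul_of_nonneg_right hk' (mul_pos (mul_pos two_pos hπ) hL).le]
    linarith
  · intro h
    refine ⟨1, le_refl 1, ?_⟩
    have hx1 : 0 < (2 * π * (1:ℕ) / L) ^ 2 := by
      push_cast
      positivity
    rw [aux9 _ _ _ hα hx1]
    push_cast
    push_cast at h ⊢
    simpa using h
end

section
/- Let χ_S, χ_N, ε, D_S, α > 0 and let σ ∈ (0, 1/ε) solve χ_N − σ/(1−(εσ)²) = χ_S σ/√(4D_Sα + σ²). Then automatically λ⁻ := −σ + (χ_S + χ_N)(1 − (εσ)²) > 0 and λ⁺ := −σ + (χ_N − χ_S)(1 − (εσ)²) < 0. -/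
open Real

theorem stmt16 (χS χN ε DS α σ : ℝ) (hS : 0 < χS) (hN : 0 < χN) (hε : 0 < ε)
    (hD : 0 < DS) (hα : 0 < α) (hσ : σ ∈ Set.Ioo 0 (1 / ε))
    (heq : χN - σ / (1 - (ε * σ) ^ 2) = χS * σ / Real.sqrt (4 * DS * α + σ ^ 2)) :
    0 < -σ + (χS + χN) * (1 - (ε * σ) ^ 2) ∧
    -σ + (χN - χS) * (1 - (ε * σ) ^ 2) < 0 := by
  obtain ⟨h1, h2⟩ := hσ
  have hεσ : ε * σ < 1 := by
    rw [lt_div_iff₀ hε] at h2; linarith [mul_comm σ ε]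
  have hεσ0 : 0 < ε * σ := mul_pos hε h1
  have hu : 0 < 1 - (ε * σ) ^ 2 := by nlinarith
  have hsq : Real.sqrt (4 * DS * α + σ ^ 2) ^ 2 = 4 * DS * α + σ ^ 2 :=
    Real.sq_sqrt (by positivity)
  have hs : 0 < Real.sqrt (4 * DS * α + σ ^ 2) := Real.sqrt_pos.mpr (by positivity)
  have hR1 : 0 < χS * σ / Real.sqrt (4 * DS * α + σ ^ 2) := by positivity
  have hR2 : χS * σ / Real.sqrt (4 * DS * α + σ ^ 2) < χS := by
    rw [div_lt_iff₀ hs]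
    have hlt : σ < Real.sqrt (4 * DS * α + σ ^ 2) := by nlinarith
    nlinarith
  have h3 : 0 < χN - σ / (1 - (ε * σ) ^ 2) := by rw [heq]; exact hR1
  have h4 : χN - σ / (1 - (ε * σ) ^ 2) < χS := by rw [heq]; exact hR2
  have h5 : σ / (1 - (ε * σ) ^ 2) * (1 - (ε * σ) ^ 2) = σ :=
    div_mul_cancel₀ _ hu.ne'
  constructor
  · nlinarith [mul_pos h3 hu, mul_pos hS hu]
  · nlinarith [mul_pos (sub_pos.mpr h4) hu]
end
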